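/- arXiv:2511.09412 — 4 statements merged into one kernel-verified Lean document; each statement's English description precedes it below -/
import Mathlib

section
/- Let K ≥ 2 be an integer and d₁ a real number with 0 < d₁ < 1/K. Define f : [0,∞) → ℝ by f(λ) = 1 + (K−1)e^{−λ} − K e^{−d₁λ}. Then f(0) = 0, there exists a unique λ* > 0 with f(λ*) = 0, f(λ) < 0 for all 0 < λ < λ*, f(λ) > 0 for all λ > λ*, and λ* satisfies the bounds (1/(1−d₁))·log((K−1)/(K d₁)) < λ* < (1/d₁)·log K. Moreover, f attains its minimum on [0,∞) at the unique point λ_min = (1/(1−d₁))·log((K−1)/(K d₁)), it is strictly decreasing on [0, λ_min] and strictly increasing on [λ_min, ∞). -/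
/-- properties of `f(λ) = 1 + (K−1)e^{−λ} − K e^{−d₁λ}` for
`K ≥ 2` and `0 < d₁ < 1/K`: `f(0) = 0`, a unique positive root `λ*` with sign
pattern and explicit bounds, and a unique minimum at
`λ_min = (1/(1−d₁)) log((K−1)/(K d₁))` with strict monotonicity on either side. -/
theorem stmt_3 (K : ℕ) (hK : 2 ≤ K) (d₁ : ℝ) (hd₁ : 0 < d₁) (hd₁K : d₁ < 1 / K)
    (f : ℝ → ℝ)
    (hf : f = fun lam => 1 + ((K : ℝ) - 1) * Real.exp (-lam) - (K : ℝ) * Real.exp (-d₁ * lam))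
    (lamMin : ℝ)
    (hlamMin : lamMin = (1 / (1 - d₁)) * Real.log (((K : ℝ) - 1) / ((K : ℝ) * d₁))) :
    f 0 = 0 ∧
    (∃! lam : ℝ, 0 < lam ∧ f lam = 0) ∧
    (∀ lam : ℝ, 0 < lam → f lam = 0 →
      (∀ x : ℝ, 0 < x → x < lam → f x < 0) ∧
      (∀ x : ℝ, lam < x → 0 < f x) ∧
      (1 / (1 - d₁)) * Real.log (((K : ℝ) - 1) / ((K : ℝ) * d₁)) < lam ∧
      lam < (1 / d₁) * Real.log (K : ℝ)) ∧
    (∀ x : ℝ, 0 ≤ x → f lamMin ≤ f x) ∧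
    (∀ x : ℝ, 0 ≤ x → f x = f lamMin → x = lamMin) ∧
    StrictAntiOn f (Set.Icc 0 lamMin) ∧
    StrictMonoOn f (Set.Ici lamMin) := by
  have hK2 : (2:ℝ) ≤ (K:ℝ) := by exact_mod_cast hK
  have hK0 : (0:ℝ) < (K:ℝ) := by linarith
  have hA0 : (0:ℝ) < (K:ℝ) - 1 := by linarith
  have hA1 : (1:ℝ) ≤ (K:ℝ) - 1 := by linarith
  have hKd : (K:ℝ) * d₁ < 1 := by
    have := (lt_div_iff₀ hK0).mp hd₁K
    nlinarith
  have hBpos : 0 < (K:ℝ) * d₁ := by positivity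
  have hd₁1 : d₁ < 1 := by nlinarith
  have hc : 0 < 1 - d₁ := by linarith
  have hAB : 1 < ((K:ℝ) - 1) / ((K:ℝ) * d₁) := (one_lt_div hBpos).mpr (by linarith)
  have hABpos : (0:ℝ) < ((K:ℝ) - 1) / ((K:ℝ) * d₁) := by positivity
  have hlog : 0 < Real.log (((K:ℝ) - 1) / ((K:ℝ) * d₁)) := Real.log_pos hAB
  have hlamMin_pos : 0 < lamMin := by rw [hlamMin]; positivity
  have hclam : (1 - d₁) * lamMin = Real.log (((K:ℝ) - 1) / ((K:ℝ) * d₁)) := by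
    rw [hlamMin]; field_simp
  -- derivative
  have hD : ∀ x : ℝ, HasDerivAt f
      ((K:ℝ) * d₁ * Real.exp (-d₁ * x) - ((K:ℝ) - 1) * Real.exp (-x)) x := by
    intro x
    rw [hf]
    have h1 : HasDerivAt (fun lam : ℝ => -lam) (-1) x := (hasDerivAt_id x).neg
    have h2 := (h1.exp).const_mul ((K:ℝ) - 1)
    have h3 : HasDerivAt (fun lam : ℝ => -d₁ * lam) (-d₁) x := by
      simpa using (hasDerivAt_id x).const_mul (-d₁)
    have h4 := (h3.exp).const_mul (K:ℝ)
    have h5 := ((hasDerivAt_const x (1:ℝ)).add h2).sub h4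
    exact h5.congr_deriv (by ring)
  -- sign of the derivative
  have hsign : ∀ x : ℝ,
      ((K:ℝ) * d₁ * Real.exp (-d₁ * x) - ((K:ℝ) - 1) * Real.exp (-x) < 0 ↔ x < lamMin) := by
    intro x
    rw [sub_neg, show (-d₁ * x : ℝ) = (1 - d₁) * x + (-x) by ring, Real.exp_add, ← mul_assoc,
      mul_lt_mul_iff_of_pos_right (Real.exp_pos _), mul_comm ((K:ℝ) * d₁), ← lt_div_iff₀ hBpos,
      ← Real.exp_log hABpos, Real.exp_lt_exp, ← hclam]
    exact mul_lt_mul_iff_right₀ hc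
  have hsign' : ∀ x : ℝ,
      (0 < (K:ℝ) * d₁ * Real.exp (-d₁ * x) - ((K:ℝ) - 1) * Real.exp (-x) ↔ lamMin < x) := by
    intro x
    rw [sub_pos, show (-d₁ * x : ℝ) = (1 - d₁) * x + (-x) by ring, Real.exp_add, ← mul_assoc,
      mul_lt_mul_iff_of_pos_right (Real.exp_pos _), mul_comm ((K:ℝ) * d₁), ← div_lt_iff₀ hBpos,
      ← Real.exp_log hABpos, Real.exp_lt_exp, ← hclam]
    exact mul_lt_mul_iff_right₀ hc
  have hcont : Continuous f := by rw [hf]; continuity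
  -- monotonicity
  have hanti : StrictAntiOn f (Set.Icc 0 lamMin) := by
    apply strictAntiOn_of_deriv_neg (convex_Icc _ _) hcont.continuousOn
    intro x hx
    rw [interior_Icc] at hx
    rw [(hD x).deriv]
    exact (hsign x).mpr hx.2
  have hmono : StrictMonoOn f (Set.Ici lamMin) := by
    apply strictMonoOn_of_deriv_pos (convex_Ici _) hcont.continuousOn
    intro x hx
    rw [interior_Ici] at hx
    rw [(hD x).deriv]
    exact (hsign' x).mpr hx
  have hf0 : f 0 = 0 := by rw [hf]; simp
  have h0mem : (0:ℝ) ∈ Set.Icc (0:ℝ) lamMin := ⟨le_rfl, hlamMin_pos.le⟩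
  have hminmem : lamMin ∈ Set.Icc (0:ℝ) lamMin := ⟨hlamMin_pos.le, le_rfl⟩
  have hfmin : f lamMin < 0 := by
    have := hanti h0mem hminmem hlamMin_pos
    rwa [hf0] at this
  -- upper comparison point
  set lu : ℝ := (1 / d₁) * Real.log (K:ℝ) with hlu
  have hlogK : 0 < Real.log (K:ℝ) := Real.log_pos (by linarith)
  have hlu_pos : 0 < lu := by rw [hlu]; positivity
  have hflu : f lu = ((K:ℝ) - 1) * Real.exp (-lu) := by
    rw [hf]
    simp only
    have hdlu : -d₁ * ((1 / d₁) * Real.log (K:ℝ)) = -Real.log (K:ℝ) := by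
      field_simp
    have h2 : Real.exp (-Real.log (K:ℝ)) = 1 / (K:ℝ) := by
      rw [Real.exp_neg, Real.exp_log hK0, one_div]
    rw [hlu, hdlu, h2]
    field_simp
    ring
  have hflu_pos : 0 < f lu := by rw [hflu]; positivity
  have hmin_lt_lu : lamMin < lu := by
    by_contra h
    push_neg at h
    have := hanti h0mem ⟨hlu_pos.le, h⟩ hlu_pos
    rw [hf0] at this
    linarith
  -- existence of the root
  obtain ⟨lam, hlam_mem, hlam_root⟩ : ∃ lam ∈ Set.Icc lamMin lu, f lam = 0 := by
    have h0 : (0:ℝ) ∈ Set.Icc (f lamMin) (f lu) := ⟨hfmin.le, hflu_pos.le⟩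
    have := intermediate_value_Icc hmin_lt_lu.le hcont.continuousOn h0
    obtain ⟨lam, hm, he⟩ := this
    exact ⟨lam, hm, he⟩
  have hlam_pos : 0 < lam := lt_of_lt_of_le hlamMin_pos hlam_mem.1
  -- every positive root lies strictly above lamMin
  have hroot_gt : ∀ μ : ℝ, 0 < μ → f μ = 0 → lamMin < μ := by
    intro μ hμ hμ0
    by_contra h
    push_neg at h
    have := hanti h0mem ⟨hμ.le, h⟩ hμ
    rw [hf0, hμ0] at this
    exact lt_irrefl 0 this
  have hlam_gt : lamMin < lam := hroot_gt lam hlam_pos hlam_root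
  -- uniqueness of the root
  have huniq : ∀ μ : ℝ, 0 < μ → f μ = 0 → μ = lam := by
    intro μ hμ hμ0
    have h1 := hroot_gt μ hμ hμ0
    exact hmono.injOn (Set.mem_Ici.mpr h1.le) (Set.mem_Ici.mpr hlam_gt.le)
      (by rw [hμ0, hlam_root])
  refine ⟨hf0, ⟨lam, ⟨hlam_pos, hlam_root⟩, fun μ hμ => huniq μ hμ.1 hμ.2⟩, ?_, ?_, ?_, hanti, hmono⟩
  · -- properties of any positive root
    intro lam' hlam' hroot'
    have hgt : lamMin < lam' := hroot_gt lam' hlam' hroot'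
    refine ⟨?_, ?_, ?_, ?_⟩
    · intro x hx hxl
      rcases le_or_gt x lamMin with h | h
      · have := hanti h0mem ⟨hx.le, h⟩ hx
        rwa [hf0] at this
      · have := hmono (Set.mem_Ici.mpr h.le) (Set.mem_Ici.mpr hgt.le) hxl
        rwa [hroot'] at this
    · intro x hxl
      have := hmono (Set.mem_Ici.mpr hgt.le) (Set.mem_Ici.mpr (hgt.trans hxl).le) hxl
      rwa [hroot'] at this
    · rw [← hlamMin]; exact hgt
    · by_contra h
      push_neg at h
      rcases eq_or_lt_of_le h with he | hlt
      · rw [he, hroot'] at hflu_pos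
        exact lt_irrefl 0 hflu_pos
      · have := hmono (Set.mem_Ici.mpr hmin_lt_lu.le)
          (Set.mem_Ici.mpr (hmin_lt_lu.trans hlt).le) hlt
        rw [hroot'] at this
        linarith
  · -- lamMin is a global minimum on [0, ∞)
    intro x hx
    rcases lt_trichotomy x lamMin with h | h | h
    · exact (hanti ⟨hx, h.le⟩ hminmem h).le
    · rw [h]
    · exact (hmono (Set.mem_Ici.mpr le_rfl) (Set.mem_Ici.mpr h.le) h).le
  · -- uniqueness of the minimum point
    intro x hx hfx
    rcases lt_trichotomy x lamMin with h | h | h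
    · have := hanti ⟨hx, h.le⟩ hminmem h
      rw [hfx] at this
      exact absurd this (lt_irrefl _)
    · exact h
    · have := hmono (Set.mem_Ici.mpr le_rfl) (Set.mem_Ici.mpr h.le) h
      rw [hfx] at this
      exact absurd this (lt_irrefl _)
end

section
/- Let K ≥ 2 be an integer, let P_X be a probability vector on {0,…,K−1} with P_X(k) > 0 for all k, write p := min_k P_X(k), and let d₁ be a real number with 0 < d₁ < p (note p ≤ 1/K). Let λ* > 0 be the unique positive root of f(λ) = 1 + (K−1)e^{−λ} − K e^{−d₁λ}. Then e^{−λ*} / (1 + (K−1)e^{−λ*}) < min_k P_X(k). -/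
open Real

lemma one_sub_inv_le_log {t : ℝ} (ht : 0 < t) : 1 - 1/t ≤ Real.log t := by
  have h := Real.log_le_sub_one_of_pos (inv_pos.mpr ht)
  rw [Real.log_inv] at h
  have : t⁻¹ = 1/t := (one_div t).symm
  linarith [h, this ▸ h]

lemma key_ineq (K p q : ℝ) (hK : 2 ≤ K) (hp : 0 < p) (hq : 0 < q)
    (hKp : K * p ≤ 1) (hqdef : q = 1 - (K - 1) * p) :
    1 ≤ K * p ^ p * q ^ (1 - p) := by
  have hKpos : 0 < K := by linarith
  have hp1 : p < 1 := by nlinarith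
  have hKppos : 0 < K * p := by positivity
  have hKqpos : 0 < K * q := by positivity
  have h1 : 1 - 1/(K*p) ≤ Real.log (K*p) := one_sub_inv_le_log hKppos
  have h2 : 1 - 1/(K*q) ≤ Real.log (K*q) := one_sub_inv_le_log hKqpos
  have hkey : (1 - p) ≤ (K - 1) * q := by nlinarith [mul_nonneg (by linarith : (0:ℝ) ≤ K - 2) (by linarith : (0:ℝ) ≤ 1 - K*p)]
  have e1 : p * (1 - 1/(K*p)) = p - 1/K := by field_simp
  have e2 : (1-p) * (1 - 1/(K*q)) = (1-p) - (1-p)/(K*q) := by ring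
  have h3 : (1-p)/(K*q) ≤ (K-1)/K := by
    rw [div_le_div_iff₀ hKqpos hKpos]
    nlinarith
  have hL : 0 ≤ p * Real.log (K*p) + (1-p) * Real.log (K*q) := by
    have b1 : p - 1/K ≤ p * Real.log (K*p) := by
      rw [← e1]; exact mul_le_mul_of_nonneg_left h1 hp.le
    have b2 : (1-p) - (1-p)/(K*q) ≤ (1-p) * Real.log (K*q) := by
      rw [← e2]; exact mul_le_mul_of_nonneg_left h2 (by linarith)
    have : (K-1)/K + 1/K = 1 := by field_simp; ring
    linarith
  have hexp : Real.exp (p * Real.log (K*p) + (1-p) * Real.log (K*q))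
      = (K*p) ^ p * (K*q) ^ (1-p) := by
    rw [Real.exp_add, Real.rpow_def_of_pos hKppos, Real.rpow_def_of_pos hKqpos]
    ring_nf
  have hprod : (K*p) ^ p * (K*q) ^ (1-p) = K * p ^ p * q ^ (1-p) := by
    rw [Real.mul_rpow hKpos.le hp.le, Real.mul_rpow hKpos.le hq.le]
    have : K ^ p * K ^ (1-p) = K := by
      rw [← Real.rpow_add hKpos]; norm_num
    calc K ^ p * p ^ p * (K ^ (1-p) * q ^ (1-p))
        = (K ^ p * K ^ (1-p)) * (p ^ p * q ^ (1-p)) := by ring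
      _ = K * p ^ p * q ^ (1-p) := by rw [this]; ring
  have := Real.one_le_exp hL
  rw [hexp, hprod] at this
  exact this



/-- with `p = min_k P_X(k)`, `0 < d₁ < p`, and `λ*` the unique
positive root of `1 + (K−1)e^{−λ} − K e^{−d₁λ}`, one has
`e^{−λ*}/(1 + (K−1)e^{−λ*}) < min_k P_X(k)`. -/
theorem stmt_4 (K : ℕ) (hK : 2 ≤ K)
    (P : Fin K → ℝ) (hPpos : ∀ k, 0 < P k) (hPsum : ∑ k, P k = 1)
    (p : ℝ)
    (hp : p = Finset.univ.inf'
      (Finset.univ_nonempty_iff.mpr ⟨⟨0, by omega⟩⟩) P)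
    (d₁ : ℝ) (hd₁ : 0 < d₁) (hd₁p : d₁ < p)
    (lam : ℝ) (hlam : 0 < lam)
    (hroot : 1 + ((K : ℝ) - 1) * Real.exp (-lam) - (K : ℝ) * Real.exp (-d₁ * lam) = 0) :
    Real.exp (-lam) / (1 + ((K : ℝ) - 1) * Real.exp (-lam)) < p := by
  have hKR : (2:ℝ) ≤ (K:ℝ) := by exact_mod_cast hK
  have hKpos : (0:ℝ) < K := by linarith
  set x := Real.exp (-lam) with hxdef
  have hx0 : 0 < x := Real.exp_pos _
  have hx1 : x < 1 := by
    apply Real.exp_lt_one_iff.mpr ; linarith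
  have hppos : 0 < p := hd₁.trans hd₁p
  -- p ≤ P k for all k
  have hple : ∀ k, p ≤ P k := by
    intro k
    rw [hp]
    exact Finset.inf'_le _ (Finset.mem_univ k)
  have hKp : (K:ℝ) * p ≤ 1 := by
    have : ∑ k : Fin K, p ≤ ∑ k, P k := Finset.sum_le_sum (fun k _ => hple k)
    simpa [Finset.sum_const, Finset.card_univ, hPsum, mul_comm] using this
  set q : ℝ := 1 - ((K:ℝ) - 1) * p with hqdef
  have hqpos : 0 < q := by nlinarith
  have hpq : p ≤ q := by nlinarith
  -- rewrite root equation with rpow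
  have hxd : x ^ d₁ = Real.exp (-d₁ * lam) := by
    rw [Real.rpow_def_of_pos hx0, Real.log_exp]
    ring_nf
  have heq : (K:ℝ) * x ^ d₁ = 1 + ((K:ℝ) - 1) * x := by
    rw [hxd]; linarith
  have hden : 0 < 1 + ((K:ℝ) - 1) * x := by nlinarith
  rw [div_lt_iff₀ hden]
  -- goal: x < p * (1 + (K-1)x), equivalent to x * q < p
  suffices h : x * q < p by nlinarith
  rcases le_or_gt q p with hcase | hcase
  · nlinarith
  · -- p < q, suppose for contradiction p ≤ x * q
    by_contra hcon
    push_neg at hcon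
    set x₀ : ℝ := p / q with hx₀def
    have hx₀pos : 0 < x₀ := by positivity
    have hx₀lt1 : x₀ < 1 := (div_lt_one hqpos).mpr hcase
    have hx₀le : x₀ ≤ x := (div_le_iff₀ hqpos).mpr hcon
    have hp1 : p < 1 := by nlinarith
    -- key inequality: K * x₀ ^ p ≥ 1 + (K-1) * x₀
    have hkey := key_ineq (K:ℝ) p q hKR hppos hqpos hKp hqdef
    have hq1p : q ^ (1-p) = q / q ^ p := by
      rw [Real.rpow_sub hqpos, Real.rpow_one]
    have hx₀p : x₀ ^ p = p ^ p / q ^ p := Real.div_rpow hppos.le hqpos.le p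
    have hqppos : 0 < q ^ p := Real.rpow_pos_of_pos hqpos p
    have hkey2 : 1 + ((K:ℝ)-1) * x₀ ≤ (K:ℝ) * x₀ ^ p := by
      have h1 : 1 + ((K:ℝ)-1) * x₀ = 1 / q := by
        rw [hx₀def]; field_simp; ring
      rw [h1, hx₀p]
      rw [hq1p] at hkey
      rw [div_le_iff₀ hqpos]
      calc (1:ℝ) ≤ (K:ℝ) * p ^ p * (q / q ^ p) := hkey
        _ = (K:ℝ) * (p ^ p / q ^ p) * q := by ring
    -- concavity combination
    have hconc := (Real.strictConcaveOn_rpow hppos hp1).concaveOn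
    obtain ⟨a, hadef⟩ : ∃ a : ℝ, a = (1 - x) / (1 - x₀) := ⟨_, rfl⟩
    obtain ⟨b, hbdef⟩ : ∃ b : ℝ, b = (x - x₀) / (1 - x₀) := ⟨_, rfl⟩
    have hx₀d : 0 < 1 - x₀ := by linarith
    have ha : 0 ≤ a := by rw [hadef]; apply div_nonneg <;> linarith
    have hb : 0 ≤ b := by rw [hbdef]; apply div_nonneg <;> linarith
    have hab : a + b = 1 := by
      rw [hadef, hbdef, ← add_div]
      have : 1 - x + (x - x₀) = 1 - x₀ := by ring
      rw [this]; exact div_self (ne_of_gt hx₀d)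
    have hcomb : a * x₀ + b * 1 = x := by
      rw [hadef, hbdef]
      rw [div_mul_eq_mul_div, mul_one, ← add_div]
      rw [div_eq_iff (ne_of_gt hx₀d)]
      ring
    have hcc := hconc.2 (Set.mem_Ici.mpr hx₀pos.le) (Set.mem_Ici.mpr (zero_le_one))
      ha hb hab
    simp only [smul_eq_mul] at hcc
    rw [hcomb] at hcc
    rw [Real.one_rpow] at hcc
    -- hcc : a * x₀ ^ p + b * 1 ≤ x ^ p
    have hxp : 1 + ((K:ℝ)-1) * x ≤ (K:ℝ) * x ^ p := by
      have h4 : a * ((K:ℝ) * x₀ ^ p) + b * (K:ℝ) ≤ (K:ℝ) * x ^ p := by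
        calc a * ((K:ℝ) * x₀ ^ p) + b * (K:ℝ) = (K:ℝ) * (a * x₀ ^ p + b * 1) := by ring
          _ ≤ (K:ℝ) * x ^ p := by
              apply mul_le_mul_of_nonneg_left hcc hKpos.le
      have h5 : 1 + ((K:ℝ)-1) * x ≤ a * ((K:ℝ) * x₀ ^ p) + b * (K:ℝ) := by
        have h6 : a * (1 + ((K:ℝ)-1) * x₀) + b * (K:ℝ) = 1 + ((K:ℝ)-1) * x := by
          have : a * (1 + ((K:ℝ)-1) * x₀) + b * (K:ℝ)
              = (a + b) + ((K:ℝ)-1) * (a * x₀ + b * 1) := by ring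
          rw [this, hab, hcomb]
        rw [← h6]
        have := mul_le_mul_of_nonneg_left hkey2 ha
        linarith
      linarith
    -- but x^p < x^{d₁} since d₁ < p and x < 1
    have hlt : x ^ p < x ^ d₁ := Real.rpow_lt_rpow_of_exponent_gt hx0 hx1 hd₁p
    linarith [mul_lt_mul_of_pos_left hlt hKpos]
end

section
/- Let 𝒳 and 𝒴 be finite alphabets with |𝒳| ≥ 2 and |𝒴| ≥ 2, and let d : 𝒳×𝒴 → [0,∞) be a normal distortion measure (for every k ∈ 𝒳 there is l ∈ 𝒴 with d(k,l) = 0) such that for every l ∈ 𝒴 there exists k ∈ 𝒳 with d(k,l) > 0. Then there exist two distinct letters k₁, k₂ ∈ 𝒳 and two distinct letters l₁, l₂ ∈ 𝒴 such that d(k₁,l₁) = 0 and d(k₁,l₂) > 0, and d(k₂,l₂) = 0 and d(k₂,l₁) > 0. -/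
/-- a normal distortion measure whose every reproduction letter has
positive distortion against some source letter admits distinct source letters
`k₁ ≠ k₂` and distinct reproduction letters `l₁ ≠ l₂` with
`d(k₁,l₁) = 0 < d(k₁,l₂)` and `d(k₂,l₂) = 0 < d(k₂,l₁)`. -/
theorem stmt_8 {X Y : Type*} [Fintype X] [Fintype Y]
    (hX : 2 ≤ Fintype.card X) (hY : 2 ≤ Fintype.card Y)
    (d : X → Y → ℝ) (hd : ∀ k l, 0 ≤ d k l)
    (hnormal : ∀ k, ∃ l, d k l = 0)
    (hcol : ∀ l, ∃ k, 0 < d k l) :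
    ∃ k₁ k₂ : X, k₁ ≠ k₂ ∧ ∃ l₁ l₂ : Y, l₁ ≠ l₂ ∧
      d k₁ l₁ = 0 ∧ 0 < d k₁ l₂ ∧ d k₂ l₂ = 0 ∧ 0 < d k₂ l₁ := by
  classical
  set Z : Y → Finset X := fun l => Finset.univ.filter (fun k => d k l = 0) with hZ
  have hmem : ∀ k l, k ∈ Z l ↔ d k l = 0 := by intro k l; simp [hZ]
  have key : ∃ l₁ l₂ : Y, ¬ (Z l₁ ⊆ Z l₂) ∧ ¬ (Z l₂ ⊆ Z l₁) := by
    by_contra h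
    push_neg at h
    have hcomp : ∀ l₁ l₂, Z l₁ ⊆ Z l₂ ∨ Z l₂ ⊆ Z l₁ := by
      intro l₁ l₂
      by_cases hc : Z l₁ ⊆ Z l₂
      · exact Or.inl hc
      · exact Or.inr (h l₁ l₂ hc)
    have hYne : Nonempty Y := Fintype.card_pos_iff.mp (by omega)
    have huniv : (Finset.univ : Finset Y).Nonempty := Finset.univ_nonempty
    obtain ⟨lm, -, hmax⟩ :=
      Finset.exists_max_image Finset.univ (fun l => (Z l).card) huniv
    have hall : ∀ l, Z l ⊆ Z lm := by
      intro l
      rcases hcomp l lm with h1 | h1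
      · exact h1
      · have := Finset.eq_of_subset_of_card_le h1 (hmax l (Finset.mem_univ l))
        exact this ▸ Finset.Subset.refl _
    obtain ⟨k, hk⟩ := hcol lm
    obtain ⟨l, hl⟩ := hnormal k
    have : k ∈ Z lm := hall l ((hmem k l).mpr hl)
    rw [hmem] at this
    linarith
  obtain ⟨l₁, l₂, h1, h2⟩ := key
  obtain ⟨k₁, hk₁, hk₁'⟩ := Finset.not_subset.mp h1
  obtain ⟨k₂, hk₂, hk₂'⟩ := Finset.not_subset.mp h2
  rw [hmem] at hk₁ hk₂ hk₁' hk₂'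
  have p1 : 0 < d k₁ l₂ := lt_of_le_of_ne (hd k₁ l₂) (Ne.symm hk₁')
  have p2 : 0 < d k₂ l₁ := lt_of_le_of_ne (hd k₂ l₁) (Ne.symm hk₂')
  refine ⟨k₁, k₂, ?_, l₁, l₂, ?_, hk₁, p1, hk₂, p2⟩
  · rintro rfl; exact hk₁' hk₂
  · rintro rfl; exact hk₁' hk₁
end

section
/- Let 𝒳 and 𝒴 be finite alphabets, let d : 𝒳×𝒴 → [0,∞) be a distortion measure, and let P_X be a source distribution on 𝒳 with P_X(k) > 0 for all k. Suppose the map l ↦ Σ_k P_X(k) d(k,l) attains its minimum exactly at two distinct letters l₁, l₂ ∈ 𝒴, with common minimal value D_max. Then the set of optimal test channels at distortion level D_max (channels minimizing I(P_X,W) subject to E_{P_X,W}[d] ≤ D_max) is exactly the set of channels of the form W(l₁|k) = λ, W(l₂|k) = 1−λ, and W(l|k) = 0 for l ∉ {l₁,l₂}, for all k ∈ 𝒳 and some fixed λ ∈ [0,1]; each of these channels has I(P_X,W) = 0 and expected distortion exactly D_max, so R(D_max) = 0. -/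
open scoped BigOperators

def IsProbDist {X : Type*} [Fintype X] (P : X → ℝ) : Prop :=
  (∀ k, 0 ≤ P k) ∧ ∑ k, P k = 1

def IsChannel {X Y : Type*} [Fintype Y] (W : X → Y → ℝ) : Prop :=
  (∀ k l, 0 ≤ W k l) ∧ ∀ k, ∑ l, W k l = 1

def outMarginal {X Y : Type*} [Fintype X] (P : X → ℝ) (W : X → Y → ℝ) (l : Y) : ℝ :=
  ∑ k, P k * W k l

/-- Mutual information `I(P_X, W)`; terms with `W k l = 0` vanish automatically. -/
noncomputable def mutualInfo {X Y : Type*} [Fintype X] [Fintype Y]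
    (P : X → ℝ) (W : X → Y → ℝ) : ℝ :=
  ∑ k, ∑ l, P k * W k l * Real.log (W k l / outMarginal P W l)

/-- Expected distortion `E_{P_X, W}[d]`. -/
def expDist {X Y : Type*} [Fintype X] [Fintype Y]
    (P : X → ℝ) (W : X → Y → ℝ) (d : X → Y → ℝ) : ℝ :=
  ∑ k, ∑ l, P k * W k l * d k l

/-- Rate distortion function `R(D)`. -/
noncomputable def RD {X Y : Type*} [Fintype X] [Fintype Y]
    (P : X → ℝ) (d : X → Y → ℝ) (D : ℝ) : ℝ :=
  sInf {r | ∃ W : X → Y → ℝ, IsChannel W ∧ expDist P W d ≤ D ∧ r = mutualInfo P W}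

/-- A channel minimizing mutual information subject to `E[d] ≤ D`. -/
def IsOptimalChannel {X Y : Type*} [Fintype X] [Fintype Y]
    (P : X → ℝ) (d : X → Y → ℝ) (D : ℝ) (W : X → Y → ℝ) : Prop :=
  IsChannel W ∧ expDist P W d ≤ D ∧
    ∀ V : X → Y → ℝ, IsChannel V → expDist P V d ≤ D →
      mutualInfo P W ≤ mutualInfo P V


private lemma gibbs14 (p q : ℝ) (hp : 0 ≤ p) (hq : 0 ≤ q) (h0 : q = 0 → p = 0) :
    p - q ≤ p * Real.log (p / q) ∧ (p * Real.log (p / q) = p - q → p = q) := by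
  rcases eq_or_lt_of_le hp with h | h
  · constructor
    · rw [← h]; simp; linarith
    · rw [← h]; simp; intro h'; linarith
  · have hq' : 0 < q := by
      rcases eq_or_lt_of_le hq with h' | h'
      · exact absurd (h0 h'.symm) (by linarith)
      · exact h'
    have hx : 0 < q / p := div_pos hq' h
    have hlog : Real.log (p / q) = - Real.log (q / p) := by
      rw [← Real.log_inv]; congr 1; field_simp
    constructor
    · have := Real.log_le_sub_one_of_pos hx
      rw [hlog]
      have hqp : p * (q / p) = q := by field_simp
      nlinarith
    · intro heq
      by_contra hne
      have hne1 : q / p ≠ 1 := by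
        intro h1
        exact hne ((div_eq_one_iff_eq (ne_of_gt h)).mp h1).symm
      have := Real.log_lt_sub_one_of_pos hx hne1
      rw [hlog] at heq
      have hqp : p * (q / p) = q := by field_simp
      nlinarith

private lemma sum_two14 {Y : Type*} [Fintype Y] [DecidableEq Y] {l₁ l₂ : Y} (hl : l₁ ≠ l₂)
    (f : Y → ℝ) (a b : ℝ) (h1 : f l₁ = a) (h2 : f l₂ = b)
    (h0 : ∀ l, l ≠ l₁ → l ≠ l₂ → f l = 0) : ∑ l, f l = a + b := by
  rw [← Finset.sum_subset (Finset.subset_univ ({l₁, l₂} : Finset Y))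
    (fun x _ hx => by
      simp only [Finset.mem_insert, Finset.mem_singleton, not_or] at hx
      exact h0 x hx.1 hx.2)]
  rw [Finset.sum_pair hl, h1, h2]

private lemma mi_key14 {X Y : Type*} [Fintype X] [Fintype Y]
    (P : X → ℝ) (hP : IsProbDist P) (hPpos : ∀ k, 0 < P k)
    (V : X → Y → ℝ) (hV : IsChannel V) :
    0 ≤ mutualInfo P V ∧
      (mutualInfo P V = 0 → ∀ k l, V k l = outMarginal P V l) := by
  set Q := outMarginal P V with hQdef
  have hQ0 : ∀ l, 0 ≤ Q l := fun l =>
    Finset.sum_nonneg fun k _ => mul_nonneg (hPpos k).le (hV.1 k l)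
  have hterm : ∀ k l,
      (P k * V k l - P k * Q l ≤ P k * V k l * Real.log (V k l / Q l)) ∧
      (P k * V k l * Real.log (V k l / Q l) = P k * V k l - P k * Q l → V k l = Q l) := by
    intro k l
    have hp : 0 ≤ P k * V k l := mul_nonneg (hPpos k).le (hV.1 k l)
    have hq : 0 ≤ P k * Q l := mul_nonneg (hPpos k).le (hQ0 l)
    have h0 : P k * Q l = 0 → P k * V k l = 0 := by
      intro hz
      have hQl : Q l = 0 := by
        rcases mul_eq_zero.mp hz with h | h
        · exact absurd h (hPpos k).ne'
        · exact h
      exact (Finset.sum_eq_zero_iff_of_nonneg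
        (fun j _ => mul_nonneg (hPpos j).le (hV.1 j l))).mp hQl k (Finset.mem_univ k)
    have hlog : Real.log (V k l / Q l) = Real.log ((P k * V k l) / (P k * Q l)) := by
      rw [mul_div_mul_left _ _ (hPpos k).ne']
    obtain ⟨hle, heq⟩ := gibbs14 (P k * V k l) (P k * Q l) hp hq h0
    rw [hlog]
    refine ⟨hle, fun h => ?_⟩
    exact mul_left_cancel₀ (hPpos k).ne' (heq h)
  have hsum1 : ∑ k, ∑ l, P k * V k l = 1 := by
    simp only [← Finset.mul_sum]
    simp only [hV.2, mul_one, hP.2]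
  have hsumQ : ∑ l, Q l = 1 := by
    simp only [hQdef, outMarginal]
    rw [Finset.sum_comm]
    simp only [← Finset.mul_sum, hV.2, mul_one, hP.2]
  have hsum2 : ∑ k, ∑ l, P k * Q l = 1 := by
    simp only [← Finset.mul_sum, hsumQ, mul_one, hP.2]
  have hzero : ∑ k, ∑ l, (P k * V k l - P k * Q l) = 0 := by
    simp only [Finset.sum_sub_distrib, hsum1, hsum2, sub_self]
  have hge : (0:ℝ) ≤ mutualInfo P V := by
    have := Finset.sum_le_sum (fun k (_ : k ∈ Finset.univ) =>
      Finset.sum_le_sum (fun l (_ : l ∈ Finset.univ) => (hterm k l).1))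
    rw [hzero] at this
    exact this
  refine ⟨hge, fun hI k l => ?_⟩
  have hg : ∀ k l, 0 ≤ P k * V k l * Real.log (V k l / Q l) - (P k * V k l - P k * Q l) :=
    fun k l => sub_nonneg.mpr (hterm k l).1
  have hgsum : ∑ k, ∑ l,
      (P k * V k l * Real.log (V k l / Q l) - (P k * V k l - P k * Q l)) = 0 := by
    simp only [Finset.sum_sub_distrib]
    simp only [Finset.sum_sub_distrib] at hzero
    have : mutualInfo P V = ∑ k, ∑ l, P k * V k l * Real.log (V k l / Q l) := rfl
    rw [← this, hI]
    linarith
  have hinner := (Finset.sum_eq_zero_iff_of_nonneg (fun k _ =>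
    Finset.sum_nonneg fun l _ => hg k l)).mp hgsum k (Finset.mem_univ k)
  have hkl := (Finset.sum_eq_zero_iff_of_nonneg (fun l _ => hg k l)).mp hinner l
    (Finset.mem_univ l)
  exact (hterm k l).2 (by linarith [sub_eq_zero.mp hkl])

private lemma mi_const14 {X Y : Type*} [Fintype X] [Fintype Y]
    (P : X → ℝ) (hP1 : ∑ k, P k = 1) (f : Y → ℝ) :
    mutualInfo P (fun _ l => f l) = 0 := by
  have hQ : ∀ l, outMarginal P (fun _ l => f l) l = f l := by
    intro l
    simp only [outMarginal, ← Finset.sum_mul, hP1, one_mul]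
  unfold mutualInfo
  refine Finset.sum_eq_zero fun k _ => Finset.sum_eq_zero fun l _ => ?_
  rw [hQ l]
  by_cases hf : f l = 0
  · simp [hf]
  · rw [div_self hf, Real.log_one, mul_zero]


/-- if the map `l ↦ Σ_k P_X(k) d(k,l)` attains its minimum exactly
at two distinct letters `l₁ ≠ l₂` with common value `D_max`, and `P_X` has full
support, then the optimal test channels at level `D_max` are exactly the
channels putting mass `λ` on `l₁` and `1−λ` on `l₂` (for a fixed `λ ∈ [0,1]`,
uniformly in the source letter); each has zero mutual information and expected
distortion exactly `D_max`, so `R(D_max) = 0`. -/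
theorem stmt_14 {X Y : Type*} [Fintype X] [Fintype Y] [DecidableEq Y]
    [Nonempty X] [Nonempty Y]
    (d : X → Y → ℝ) (hd : ∀ k l, 0 ≤ d k l)
    (P : X → ℝ) (hP : IsProbDist P) (hPpos : ∀ k, 0 < P k)
    (l₁ l₂ : Y) (hl : l₁ ≠ l₂) (Dmax : ℝ)
    (h₁ : (∑ k, P k * d k l₁) = Dmax) (h₂ : (∑ k, P k * d k l₂) = Dmax)
    (hother : ∀ l, l ≠ l₁ → l ≠ l₂ → Dmax < ∑ k, P k * d k l) :
    (∀ W : X → Y → ℝ,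
      IsOptimalChannel P d Dmax W ↔
        ∃ lam : ℝ, 0 ≤ lam ∧ lam ≤ 1 ∧
          W = fun _ l => if l = l₁ then lam else if l = l₂ then 1 - lam else 0) ∧
    (∀ lam : ℝ, 0 ≤ lam → lam ≤ 1 →
      mutualInfo P (fun (_ : X) l => if l = l₁ then lam else if l = l₂ then 1 - lam else 0) = 0 ∧
      expDist P (fun (_ : X) l => if l = l₁ then lam else if l = l₂ then 1 - lam else 0) d
        = Dmax) ∧
    RD P d Dmax = 0 := by
  
  have hChan : ∀ lam : ℝ, 0 ≤ lam → lam ≤ 1 →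
      IsChannel (fun (_ : X) l => if l = l₁ then lam else if l = l₂ then 1 - lam else 0) := by
    intro lam h0 h1
    constructor
    · intro k l; dsimp only; split_ifs <;> linarith
    · intro k; dsimp only
      rw [sum_two14 hl _ lam (1 - lam) (by simp) (by simp [hl.symm])
        (fun l hA hB => by simp [hA, hB])]
      ring
  have hED : ∀ lam : ℝ,
      expDist P (fun (_ : X) l => if l = l₁ then lam else if l = l₂ then 1 - lam else 0) d
        = Dmax := by
    intro lam
    unfold expDist
    have hstep : ∀ k, ∑ l, P k * (if l = l₁ then lam else if l = l₂ then 1 - lam else 0) * d k l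
        = lam * (P k * d k l₁) + (1 - lam) * (P k * d k l₂) := by
      intro k
      refine sum_two14 hl _ _ _ ?_ ?_ ?_
      · simp; ring
      · simp [hl.symm]; ring
      · intro l hA hB; simp [hA, hB]
    simp only [hstep]
    rw [Finset.sum_add_distrib, ← Finset.mul_sum, ← Finset.mul_sum, h₁, h₂]; ring
  have hMI : ∀ lam : ℝ,
      mutualInfo P (fun (_ : X) l => if l = l₁ then lam else if l = l₂ then 1 - lam else 0)
        = 0 := fun lam => mi_const14 P hP.2 _
  have hSge : ∀ l, Dmax ≤ ∑ k, P k * d k l := by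
    intro l
    by_cases hA : l = l₁
    · subst hA; exact h₁.ge
    by_cases hB : l = l₂
    · subst hB; exact h₂.ge
    · exact (hother l hA hB).le
  refine ⟨fun W => ⟨fun hopt => ?_, fun hex => ?_⟩, fun lam h0 h1 => ⟨hMI lam, hED lam⟩, ?_⟩
  · obtain ⟨hWc, hWd, hWmin⟩ := hopt
    have h1' := hWmin _ (hChan 1 zero_le_one le_rfl) (le_of_eq (hED 1))
    rw [hMI 1] at h1'
    have hI0 : mutualInfo P W = 0 := le_antisymm h1' (mi_key14 P hP hPpos W hWc).1
    have hWQ := (mi_key14 P hP hPpos W hWc).2 hI0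
    set Q := outMarginal P W with hQdef
    have hQ0 : ∀ l, 0 ≤ Q l := fun l =>
      Finset.sum_nonneg fun k _ => mul_nonneg (hPpos k).le (hWc.1 k l)
    have hQsum : ∑ l, Q l = 1 := by
      simp only [hQdef, outMarginal]
      rw [Finset.sum_comm]
      simp only [← Finset.mul_sum, hWc.2, mul_one, hP.2]
    have hED' : expDist P W d = ∑ l, Q l * (∑ k, P k * d k l) := by
      unfold expDist
      simp only [hWQ]
      rw [Finset.sum_comm]
      refine Finset.sum_congr rfl fun l _ => ?_
      rw [Finset.mul_sum]
      exact Finset.sum_congr rfl fun k _ => by ring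
    have key : ∀ l, l ≠ l₁ → l ≠ l₂ → Q l = 0 := by
      have hle : ∑ l, Q l * ((∑ k, P k * d k l) - Dmax) ≤ 0 := by
        have expand : ∑ l, Q l * ((∑ k, P k * d k l) - Dmax)
            = (∑ l, Q l * (∑ k, P k * d k l)) - Dmax := by
          simp only [mul_sub, Finset.sum_sub_distrib, ← Finset.sum_mul, hQsum, one_mul]
        rw [expand]
        rw [hED'] at hWd
        linarith
      have hnn : ∀ l ∈ Finset.univ, (0:ℝ) ≤ Q l * ((∑ k, P k * d k l) - Dmax) :=
        fun l _ => mul_nonneg (hQ0 l) (sub_nonneg.mpr (hSge l))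
      have hz := (Finset.sum_eq_zero_iff_of_nonneg hnn).mp
        (le_antisymm hle (Finset.sum_nonneg hnn))
      intro l hA hB
      rcases mul_eq_zero.mp (hz l (Finset.mem_univ l)) with h | h
      · exact h
      · exact absurd h (by have := hother l hA hB; intro h'; linarith)
    have hQ12 : Q l₁ + Q l₂ = 1 := by
      rw [← hQsum]; exact (sum_two14 hl Q _ _ rfl rfl key).symm
    refine ⟨Q l₁, hQ0 l₁, by linarith [hQ0 l₂], ?_⟩
    funext k l
    by_cases hA : l = l₁
    · subst hA; rw [hWQ]; simp
    by_cases hB : l = l₂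
    · rw [hWQ, hB, if_neg (fun h => hl h.symm), if_pos rfl]
      linarith
    · rw [hWQ]; simp [hA, hB, key l hA hB]
  · obtain ⟨lam, h0, h1, rfl⟩ := hex
    exact ⟨hChan lam h0 h1, (hED lam).le,
      fun V hVc hVd => by rw [hMI lam]; exact (mi_key14 P hP hPpos V hVc).1⟩
  · have mem0 : (0:ℝ) ∈ {r | ∃ W : X → Y → ℝ,
        IsChannel W ∧ expDist P W d ≤ Dmax ∧ r = mutualInfo P W} :=
      ⟨_, hChan 1 zero_le_one le_rfl, (hED 1).le, (hMI 1).symm⟩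
    have lb : ∀ r ∈ {r | ∃ W : X → Y → ℝ,
        IsChannel W ∧ expDist P W d ≤ Dmax ∧ r = mutualInfo P W}, (0:ℝ) ≤ r := by
      rintro r ⟨V, hVc, _, rfl⟩
      exact (mi_key14 P hP hPpos V hVc).1
    exact le_antisymm (csInf_le ⟨0, lb⟩ mem0) (le_csInf ⟨0, mem0⟩ lb)
end
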